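/- Diagonal correspondence: for any formula α and any truth valuation v, the 'diagonal' well-formed sequence s_v(α) obtained by placing v at every leaf position of α is associated to α, and s_v(α) justifies α if and only if v classically satisfies α. -/

import Mathlib

/-- Propositional formulas built from atoms via ¬, ∨, →. -/
inductive Formula (A : Type) : Type
  | atom : A → Formula A
  | neg  : Formula A → Formula A
  | orr  : Formula A → Formula A → Formula A
  | imp  : Formula A → Formula A → Formula A
deriving DecidableEq

/-- Well-formed sequences over a collection `V` of truth valuations. -/
inductive WFS (V : Type) : Type
  | leaf : V → WFS V
  | pair : WFS V → WFS V → WFS V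
deriving DecidableEq

/-- Association between a WFS and a formula. -/
def Assoc {V A : Type} : WFS V → Formula A → Prop
  | WFS.leaf _, Formula.atom _ => True
  | s, Formula.neg β => Assoc s β
  | WFS.pair s₁ s₂, Formula.orr α β => Assoc s₁ α ∧ Assoc s₂ β
  | WFS.pair s₁ s₂, Formula.imp α β => Assoc s₁ α ∧ Assoc s₂ β
  | _, _ => False

/-- Justification of a formula by a WFS (PML semantics). -/
def Justif {V A : Type} (val : V → A → Bool) : WFS V → Formula A → Prop
  | WFS.leaf v, Formula.atom a => val v a = true
  | s, Formula.neg β => ¬ Justif val s β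
  | WFS.pair s₁ s₂, Formula.orr α β => Justif val s₁ α ∨ Justif val s₂ β
  | WFS.pair s₁ s₂, Formula.imp α β => ¬ Justif val s₁ α ∨ Justif val s₂ β
  | _, _ => False

/-- Multiplicative weight allotment extending a basic weight distribution. -/
def weight {V : Type} (pbar : V → ℝ) : WFS V → ℝ
  | WFS.leaf v => pbar v
  | WFS.pair s₁ s₂ => weight pbar s₁ * weight pbar s₂

/-- The (finite) set of WFS associated to a formula. -/
def assocSeqs {V A : Type} [Fintype V] [DecidableEq V] : Formula A → Finset (WFS V)
  | Formula.atom _ => Finset.univ.image WFS.leaf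
  | Formula.neg β => assocSeqs β
  | Formula.orr α β => (assocSeqs α ×ˢ assocSeqs β).image fun q => WFS.pair q.1 q.2
  | Formula.imp α β => (assocSeqs α ×ˢ assocSeqs β).image fun q => WFS.pair q.1 q.2

-- The logical measure of a formula: total weight of associated justifying sequences.
open scoped Classical in
noncomputable def mu {V A : Type} [Fintype V] [DecidableEq V]
    (pbar : V → ℝ) (val : V → A → Bool) (φ : Formula A) : ℝ :=
  ∑ s ∈ (assocSeqs φ).filter (fun s => Justif val s φ), weight pbar s

/-- Derived conjunction: α ∧ β := ¬(¬α ∨ ¬β). -/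
def Formula.conj {A : Type} (α β : Formula A) : Formula A :=
  Formula.neg (Formula.orr (Formula.neg α) (Formula.neg β))

/-- Classical Boolean semantics. -/
def evalF {A : Type} (v : A → Bool) : Formula A → Bool
  | Formula.atom a => v a
  | Formula.neg α => !(evalF v α)
  | Formula.orr α β => evalF v α || evalF v β
  | Formula.imp α β => !(evalF v α) || evalF v β

/-- Diagonal sequence: the valuation `v` at every leaf position of a formula. -/
def diag {V A : Type} (v : V) : Formula A → WFS V
  | Formula.atom _ => WFS.leaf v
  | Formula.neg α => diag v α
  | Formula.orr α β => WFS.pair (diag v α) (diag v β)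
  | Formula.imp α β => WFS.pair (diag v α) (diag v β)

/-- Number of atom occurrences in a formula. -/
def numAtoms {A : Type} : Formula A → ℕ
  | Formula.atom _ => 1
  | Formula.neg α => numAtoms α
  | Formula.orr α β => numAtoms α + numAtoms β
  | Formula.imp α β => numAtoms α + numAtoms β

theorem assoc_diag {V A : Type} (v : V) (α : Formula A) : Assoc (diag v α) α := by
  induction α with
  | atom => simp only [diag, Assoc]
  | neg β ih => simpa only [diag, Assoc] using ih
  | orr β γ ihβ ihγ => exact ⟨ihβ, ihγ⟩
  | imp β γ ihβ ihγ => exact ⟨ihβ, ihγ⟩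

theorem justif_diag_iff {V A : Type} (val : V → A → Bool) (v : V) (α : Formula A) :
    Justif val (diag v α) α ↔ evalF (val v) α = true := by
  induction α with
  | atom => rfl
  | neg β ih => simp only [diag, Justif, evalF, ih, Bool.not_eq_true', Bool.not_eq_true]
  | orr β γ ihβ ihγ => simp only [diag, Justif, evalF, ihβ, ihγ, Bool.or_eq_true]
  | imp β γ ihβ ihγ =>
    simp only [diag, Justif, evalF, ihβ, ihγ, Bool.or_eq_true, Bool.not_eq_true',
      Bool.not_eq_true]

/-- the diagonal sequence of α at v is associated to α and justifies α
iff v classically satisfies α. -/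
theorem stmt11 {V A : Type} (val : V → A → Bool) (v : V) (α : Formula A) :
    Assoc (diag v α) α ∧
    (Justif val (diag v α) α ↔ evalF (val v) α = true) :=
  ⟨assoc_diag v α, justif_diag_iff val v α⟩
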